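/- Entropy dissipation identity (static form of the Claim in the proof of Corollary 2.3): let f : ℝ^d → ℝ be smooth with compact support, set p := π·e^f, b := ∇ log π − γ, and σ := −∇·(p b) + Δp. Then ∫_{ℝ^d} f(x)·σ(x) dx = −∫_{ℝ^d} ‖∇f(x)‖² p(x) dx; that is, the dissipation of the relative entropy along the non-reversible Fokker–Planck equation equals minus the relative Fisher information. -/

import Mathlib

open MeasureTheory
open scoped BigOperators

noncomputable section

/-- `i`-th partial derivative of `f` at `x`, in the coordinate direction `i`. -/
def pderiv' {d : ℕ} (f : EuclideanSpace ℝ (Fin d) → ℝ) (i : Fin d)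
    (x : EuclideanSpace ℝ (Fin d)) : ℝ :=
  fderiv ℝ f x (EuclideanSpace.single i 1)

/-- second partial derivative `∂_i ∂_j f` at `x`. -/
def pderiv2 {d : ℕ} (f : EuclideanSpace ℝ (Fin d) → ℝ) (i j : Fin d)
    (x : EuclideanSpace ℝ (Fin d)) : ℝ :=
  pderiv' (fun y => pderiv' f j y) i x

/-- Laplacian `Δf`. -/
def lap {d : ℕ} (f : EuclideanSpace ℝ (Fin d) → ℝ) (x : EuclideanSpace ℝ (Fin d)) : ℝ :=
  ∑ i, pderiv2 f i i x

/-- carré du champ `Γ₁(g,h) = ⟨∇g, ∇h⟩`. -/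
def Gamma1 {d : ℕ} (g h : EuclideanSpace ℝ (Fin d) → ℝ) (x : EuclideanSpace ℝ (Fin d)) : ℝ :=
  ∑ i, pderiv' g i x * pderiv' h i x

/-- generator `L̃ h = ⟨∇ log π, ∇h⟩ + Δh`. -/
def genL {d : ℕ} (π h : EuclideanSpace ℝ (Fin d) → ℝ) (x : EuclideanSpace ℝ (Fin d)) : ℝ :=
  Gamma1 (fun y => Real.log (π y)) h x + lap h x

/-- Gamma two operator `Γ₂(f,f) = ½ L̃ Γ₁(f,f) − Γ₁(L̃f, f)`. -/
def Gamma2 {d : ℕ} (π f : EuclideanSpace ℝ (Fin d) → ℝ) (x : EuclideanSpace ℝ (Fin d)) : ℝ :=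
  (1/2 : ℝ) * genL π (fun y => Gamma1 f f y) x - Gamma1 (fun y => genL π f y) f x

/-- information Gamma operator `Γ_I(f,f) = −½⟨γ, ∇Γ₁(f,f)⟩ + (L̃f)·⟨∇f, γ⟩`. -/
def GammaI {d : ℕ} (π : EuclideanSpace ℝ (Fin d) → ℝ)
    (γ : EuclideanSpace ℝ (Fin d) → EuclideanSpace ℝ (Fin d))
    (f : EuclideanSpace ℝ (Fin d) → ℝ) (x : EuclideanSpace ℝ (Fin d)) : ℝ :=
  -(1/2 : ℝ) * (∑ i, γ x i * pderiv' (fun y => Gamma1 f f y) i x)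
    + genL π f x * (∑ i, pderiv' f i x * γ x i)

/-- the tensor `ℜ` of the paper:
`ℜ_{ij} = −∂²_{ij} log π + ((3−2d)/8) γ_i γ_j − (1/8) δ_{ij} Σ_k γ_k²
          + ½(γ_i ∂_j log π + γ_j ∂_i log π)`. -/
def Rtensor {d : ℕ} (π : EuclideanSpace ℝ (Fin d) → ℝ)
    (γ : EuclideanSpace ℝ (Fin d) → EuclideanSpace ℝ (Fin d))
    (i j : Fin d) (x : EuclideanSpace ℝ (Fin d)) : ℝ :=
  -pderiv2 (fun y => Real.log (π y)) i j x
    + ((3 - 2 * (d : ℝ)) / 8) * γ x i * γ x j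
    - (1/8 : ℝ) * (if i = j then ∑ k, (γ x k) ^ 2 else 0)
    + (1/2 : ℝ) * (γ x i * pderiv' (fun y => Real.log (π y)) j x
        + γ x j * pderiv' (fun y => Real.log (π y)) i x)

/-- the modified Hessian matrix `𝔥ess f`. -/
def hessM {d : ℕ} (γ : EuclideanSpace ℝ (Fin d) → EuclideanSpace ℝ (Fin d))
    (f : EuclideanSpace ℝ (Fin d) → ℝ) (i j : Fin d) (x : EuclideanSpace ℝ (Fin d)) : ℝ :=
  if i = j then
    pderiv2 f i i x + (1/2 : ℝ) * (∑ k, γ x k * pderiv' f k x)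
      - (1/2 : ℝ) * γ x i * pderiv' f i x
  else
    pderiv2 f i j x - (1/4 : ℝ) * (γ x i * pderiv' f j x + γ x j * pderiv' f i x)

/-- right-hand side of the Fokker–Planck equation `−∇·(p b) + Δp` with drift
`b = ∇ log π − γ`, evaluated at a density `p`. -/
def FPrhs {d : ℕ} (π : EuclideanSpace ℝ (Fin d) → ℝ)
    (γ : EuclideanSpace ℝ (Fin d) → EuclideanSpace ℝ (Fin d))
    (p : EuclideanSpace ℝ (Fin d) → ℝ) (x : EuclideanSpace ℝ (Fin d)) : ℝ :=
  -(∑ i, pderiv' (fun y => p y * (pderiv' (fun z => Real.log (π z)) i y - γ y i)) i x)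
    + lap p x

/-- `L̃* p = −∇·(p ∇ log π) + Δp`. -/
def Ltilstar {d : ℕ} (π p : EuclideanSpace ℝ (Fin d) → ℝ)
    (x : EuclideanSpace ℝ (Fin d)) : ℝ :=
  -(∑ i, pderiv' (fun y => p y * pderiv' (fun z => Real.log (π z)) i y) i x) + lap p x

/-- Arnold–Carlen tensor `(ℜ_AC)_{ij} = −∂²_{ij} log π − ½(∂_i γ_j + ∂_j γ_i)`. -/
def RAC {d : ℕ} (π : EuclideanSpace ℝ (Fin d) → ℝ)
    (γ : EuclideanSpace ℝ (Fin d) → EuclideanSpace ℝ (Fin d))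
    (i j : Fin d) (x : EuclideanSpace ℝ (Fin d)) : ℝ :=
  -pderiv2 (fun y => Real.log (π y)) i j x
    - (1/2 : ℝ) * (pderiv' (fun y => γ y j) i x + pderiv' (fun y => γ y i) j x)

/-
Since `∇p = p ∇log π + p ∇f`, the Fokker–Planck operator is a divergence,
`σ = ∇·(p ∇f + p γ)`, so one integration by parts against `f` gives
`∫ f σ = -∫ ‖∇f‖² p - ∫ p ⟨γ, ∇f⟩`. The last term vanishes by stationarity:
`p ∇f = π ∇(e^f - 1)` and `e^f - 1` has compact support, so a second integration by parts
turns it into `∫ (e^f - 1) ∇·(π γ) = 0`.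
-/

section

variable {d : ℕ}

local notation "E" => EuclideanSpace ℝ (Fin d)

lemma ContDiff.pderiv' {n : WithTop ℕ∞} {g : E → ℝ} (hg : ContDiff ℝ (n + 1) g) (i : Fin d) :
    ContDiff ℝ n (fun x => pderiv' g i x) :=
  (hg.fderiv_right le_rfl).clm_apply contDiff_const

lemma HasCompactSupport.pderiv' {g : E → ℝ} (hg : HasCompactSupport g) (i : Fin d) :
    HasCompactSupport (fun x => pderiv' g i x) :=
  hg.fderiv_apply ℝ _

lemma pderiv'_sub {a b : E → ℝ} {i : Fin d} {x : E} (ha : DifferentiableAt ℝ a x)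
    (hb : DifferentiableAt ℝ b x) :
    pderiv' (fun y => a y - b y) i x = pderiv' a i x - pderiv' b i x := by
  simp only [pderiv', fderiv_fun_sub ha hb, sub_apply]

lemma pderiv'_mul {a b : E → ℝ} {i : Fin d} {x : E} (ha : DifferentiableAt ℝ a x)
    (hb : DifferentiableAt ℝ b x) :
    pderiv' (fun y => a y * b y) i x = pderiv' a i x * b x + a x * pderiv' b i x := by
  simp only [pderiv', fderiv_fun_mul ha hb, add_apply, smul_apply, smul_eq_mul]
  ring

lemma pderiv'_exp {a : E → ℝ} {i : Fin d} {x : E} (ha : DifferentiableAt ℝ a x) :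
    pderiv' (fun y => Real.exp (a y)) i x = Real.exp (a x) * pderiv' a i x := by
  simp [pderiv', fderiv_exp ha]

lemma pderiv'_log {a : E → ℝ} {i : Fin d} {x : E} (ha : DifferentiableAt ℝ a x)
    (hx : a x ≠ 0) :
    pderiv' (fun y => Real.log (a y)) i x = pderiv' a i x / a x := by
  simp [pderiv', fderiv.log ha hx, div_eq_inv_mul]

lemma integral_mul_pderiv'_eq_neg {g h : E → ℝ} (hg : ContDiff ℝ 1 g) (hgc : HasCompactSupport g)
    (hh : ContDiff ℝ 1 h) (i : Fin d) :
    ∫ x, g x * pderiv' h i x = -∫ x, pderiv' g i x * h x := by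
  have hg' : Continuous (fun x => pderiv' g i x) := (hg.pderiv' (n := 0) i).continuous
  have hh' : Continuous (fun x => pderiv' h i x) := (hh.pderiv' (n := 0) i).continuous
  exact integral_mul_fderiv_eq_neg_fderiv_mul_of_integrable
    ((hg'.mul hh.continuous).integrable_of_hasCompactSupport ((hgc.pderiv' i).mul_right))
    ((hg.continuous.mul hh').integrable_of_hasCompactSupport hgc.mul_right)
    ((hg.continuous.mul hh.continuous).integrable_of_hasCompactSupport hgc.mul_right)
    (fun _ _ => (hg.differentiable one_ne_zero).differentiableAt)
    (fun _ _ => (hh.differentiable one_ne_zero).differentiableAt)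

lemma integrable_sum_pderiv'_mul {g : E → ℝ} {V : Fin d → E → ℝ} (hg : ContDiff ℝ 1 g)
    (hgc : HasCompactSupport g) (hV : ∀ i, Continuous (V i)) :
    Integrable (fun x => ∑ i, pderiv' g i x * V i x) :=
  integrable_finsetSum _ fun i _ =>
    ((hg.pderiv' (n := 0) i).continuous.mul (hV i)).integrable_of_hasCompactSupport
      (hgc.pderiv' i).mul_right

lemma integral_mul_sum_pderiv'_eq_neg {g : E → ℝ} {V : Fin d → E → ℝ} (hg : ContDiff ℝ 1 g)
    (hgc : HasCompactSupport g) (hV : ∀ i, ContDiff ℝ 1 (V i)) :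
    ∫ x, g x * ∑ i, pderiv' (V i) i x = -∫ x, ∑ i, pderiv' g i x * V i x := by
  have hint : ∀ i, Integrable (fun x => g x * pderiv' (V i) i x) := fun i =>
    (hg.continuous.mul ((hV i).pderiv' (n := 0) i).continuous).integrable_of_hasCompactSupport
      hgc.mul_right
  have hint' : ∀ i, Integrable (fun x => pderiv' g i x * V i x) := fun i =>
    ((hg.pderiv' (n := 0) i).continuous.mul (hV i).continuous).integrable_of_hasCompactSupport
      (hgc.pderiv' i).mul_right
  simp_rw [Finset.mul_sum]
  rw [integral_finsetSum _ fun i _ => hint i, integral_finsetSum _ fun i _ => hint' i,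
    ← Finset.sum_neg_distrib]
  exact Finset.sum_congr rfl fun i _ => integral_mul_pderiv'_eq_neg hg hgc (hV i) i

lemma FPrhs_eq_sum_pderiv' {π : E → ℝ} {γ : E → E} {p : E → ℝ} (hπ : ContDiff ℝ 2 π)
    (hπ0 : ∀ x, π x ≠ 0) (hγ : ContDiff ℝ 1 γ) (hp : ContDiff ℝ 2 p) (x : E) :
    FPrhs π γ p x = ∑ i, pderiv'
      (fun y => pderiv' p i y - p y * (pderiv' (fun z => Real.log (π z)) i y - γ y i)) i x := by
  have hflux : ∀ i, ContDiff ℝ 1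
      (fun y => p y * (pderiv' (fun z => Real.log (π z)) i y - γ y i)) := fun i =>
    (hp.of_le one_le_two).mul ((hπ.log hπ0).pderiv' i |>.sub ((contDiff_piLp 2).1 hγ i))
  simp only [FPrhs, lap, pderiv2]
  rw [← Finset.sum_neg_distrib, ← Finset.sum_add_distrib]
  refine Finset.sum_congr rfl fun i _ => ?_
  rw [pderiv'_sub ((hp.pderiv' i).differentiable one_ne_zero x)
    ((hflux i).differentiable one_ne_zero x)]
  ring

lemma pderiv'_mul_exp_sub_mul_pderiv'_log {π f : E → ℝ} {i : Fin d} {x : E}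
    (hπ : DifferentiableAt ℝ π x) (hf : DifferentiableAt ℝ f x) (hπx : π x ≠ 0) :
    pderiv' (fun y => π y * Real.exp (f y)) i x
        - π x * Real.exp (f x) * pderiv' (fun y => Real.log (π y)) i x =
      π x * Real.exp (f x) * pderiv' f i x := by
  rw [pderiv'_mul hπ hf.exp, pderiv'_exp hf, pderiv'_log hπ hπx]
  field_simp
  ring

lemma FPrhs_mul_exp_eq_sum_pderiv' {π : E → ℝ} {γ : E → E} {f : E → ℝ} (hπ : ContDiff ℝ 2 π)
    (hπ0 : ∀ x, π x ≠ 0) (hγ : ContDiff ℝ 1 γ) (hf : ContDiff ℝ 2 f) (x : E) :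
    FPrhs π γ (fun z => π z * Real.exp (f z)) x =
      ∑ i, pderiv' (fun y => π y * Real.exp (f y) * (pderiv' f i y + γ y i)) i x := by
  rw [FPrhs_eq_sum_pderiv' hπ hπ0 hγ (hπ.mul hf.exp)]
  refine Finset.sum_congr rfl fun i _ => congrArg (pderiv' · i x) (funext fun y => ?_)
  linear_combination pderiv'_mul_exp_sub_mul_pderiv'_log (i := i)
    (hπ.differentiable two_ne_zero y) (hf.differentiable two_ne_zero y) (hπ0 y)

lemma integral_sum_pderiv'_mul_exp_flux_eq_zero {π : E → ℝ} {γ : E → E} {f : E → ℝ}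
    (hπ : ContDiff ℝ 1 π) (hγ : ContDiff ℝ 1 γ)
    (hstat : ∀ x, ∑ i, pderiv' (fun y => π y * γ y i) i x = 0)
    (hf : ContDiff ℝ 1 f) (hfc : HasCompactSupport f) :
    ∫ x, ∑ i, pderiv' f i x * (π x * Real.exp (f x) * γ x i) = 0 := by
  have hg : ContDiff ℝ 1 (fun x => Real.exp (f x) - 1) := hf.exp.sub contDiff_const
  have hgc : HasCompactSupport (fun x => Real.exp (f x) - 1) :=
    hfc.comp_left (g := fun t => Real.exp t - 1) (by simp)
  have key := integral_mul_sum_pderiv'_eq_neg hg hgc (V := fun i y => π y * γ y i)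
    fun i => hπ.mul ((contDiff_piLp 2).1 hγ i)
  simp only [hstat, mul_zero, integral_zero, zero_eq_neg] at key
  rw [← key]
  congr 1 with x
  refine Finset.sum_congr rfl fun i _ => ?_
  rw [pderiv'_sub (hf.differentiable one_ne_zero x).exp (differentiableAt_const _),
    pderiv'_exp (hf.differentiable one_ne_zero x)]
  simp only [pderiv', fderiv_fun_const, Pi.zero_apply, zero_apply, sub_zero]
  ring

end

theorem entropy_dissipation_identity_general
    (d : ℕ)
    (π : EuclideanSpace ℝ (Fin d) → ℝ) (hπ : ContDiff ℝ (⊤ : ℕ∞) π)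
    (hπpos : ∀ x, 0 < π x)
    (γ : EuclideanSpace ℝ (Fin d) → EuclideanSpace ℝ (Fin d))
    (hγ : ContDiff ℝ (⊤ : ℕ∞) γ)
    (hstat : ∀ x, ∑ i, pderiv' (fun y => π y * γ y i) i x = 0)
    (f : EuclideanSpace ℝ (Fin d) → ℝ) (hf : ContDiff ℝ (⊤ : ℕ∞) f)
    (hfc : HasCompactSupport f) :
    ∫ x, f x * FPrhs π γ (fun z => π z * Real.exp (f z)) x =
      -∫ x, Gamma1 f f x * (π x * Real.exp (f x)) := by
  have hle : ∀ n : ℕ∞, (n : WithTop ℕ∞) ≤ (⊤ : ℕ∞) := fun _ => WithTop.coe_le_coe.2 le_top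
  have hπ2 : ContDiff ℝ 2 π := hπ.of_le (hle 2)
  have hf2 : ContDiff ℝ 2 f := hf.of_le (hle 2)
  have hγ1 : ContDiff ℝ 1 γ := hγ.of_le (hle 1)
  have hf1 : ContDiff ℝ 1 f := hf.of_le (hle 1)
  have hp : ContDiff ℝ 1 (fun z => π z * Real.exp (f z)) := (hπ.of_le (hle 1)).mul hf1.exp
  have hγi : ∀ i, ContDiff ℝ 1 (fun y => γ y i) := (contDiff_piLp 2).1 hγ1
  have hfisher : Integrable fun x =>
      ∑ i, pderiv' f i x * (pderiv' f i x * (π x * Real.exp (f x))) :=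
    integrable_sum_pderiv'_mul hf1 hfc fun i =>
      (hf2.pderiv' (n := 1) i).continuous.mul hp.continuous
  have hdrift : Integrable fun x => ∑ i, pderiv' f i x * (π x * Real.exp (f x) * γ x i) :=
    integrable_sum_pderiv'_mul hf1 hfc fun i => hp.continuous.mul (hγi i).continuous
  simp_rw [FPrhs_mul_exp_eq_sum_pderiv' hπ2 (fun x => (hπpos x).ne') hγ1 hf2,
    integral_mul_sum_pderiv'_eq_neg hf1 hfc fun i =>
      hp.mul ((hf2.pderiv' (n := 1) i).add (hγi i))]
  calc -∫ x, ∑ i, pderiv' f i x * (π x * Real.exp (f x) * (pderiv' f i x + γ x i))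
      = -((∫ x, ∑ i, pderiv' f i x * (pderiv' f i x * (π x * Real.exp (f x))))
          + ∫ x, ∑ i, pderiv' f i x * (π x * Real.exp (f x) * γ x i)) := by
        rw [← integral_add hfisher hdrift]
        congr 2 with x
        rw [← Finset.sum_add_distrib]
        exact Finset.sum_congr rfl fun i _ => by ring
    _ = -∫ x, Gamma1 f f x * (π x * Real.exp (f x)) := by
        rw [integral_sum_pderiv'_mul_exp_flux_eq_zero (hπ.of_le (hle 1)) hγ1 hstat hf1 hfc,
          add_zero]
        simp only [Gamma1, Finset.sum_mul, mul_assoc]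

/-- Entropy dissipation identity (Claim in the proof of Corollary 2.3, static form):
with `p = π e^f`, `b = ∇ log π − γ` and `σ = −∇·(p b) + Δp`,
`∫ f σ = −∫ ‖∇f‖² p`. -/
theorem entropy_dissipation_identity
    (d : ℕ) (hd : 1 ≤ d)
    (π : EuclideanSpace ℝ (Fin d) → ℝ) (hπ : ContDiff ℝ (⊤ : ℕ∞) π)
    (hπpos : ∀ x, 0 < π x)
    (γ : EuclideanSpace ℝ (Fin d) → EuclideanSpace ℝ (Fin d))
    (hγ : ContDiff ℝ (⊤ : ℕ∞) γ)
    (hstat : ∀ x, ∑ i, pderiv' (fun y => π y * γ y i) i x = 0)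
    (f : EuclideanSpace ℝ (Fin d) → ℝ) (hf : ContDiff ℝ (⊤ : ℕ∞) f)
    (hfc : HasCompactSupport f) :
    ∫ x, f x * FPrhs π γ (fun z => π z * Real.exp (f z)) x =
      -∫ x, Gamma1 f f x * (π x * Real.exp (f x)) :=
  entropy_dissipation_identity_general d π hπ hπpos γ hγ hstat f hf hfc
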